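/- Let S be a finite set of channels generating an AVQC {N_s}_{s∈S}, l ∈ ℕ, and T ∈ QC(H^{⊗l}, S^l) a quantum-classical channel with POVM {E_{s^l}} such that the map M^l_{T,S}(a ⊗ b) := ∑_{s^l} tr(E_{s^l} a) N_{s^l}(b) is symmetric: M^l_{T,S}(a ⊗ b) = M^l_{T,S}(b ⊗ a) for all a, b ∈ B(H)^{⊗l}. Then there exists T̃ ∈ QC(H, S) with POVM {Ẽ_s} such that M_{T̃,S}(a ⊗ b) := ∑_s tr(Ẽ_s a) N_s(b) satisfies M_{T̃,S}(a ⊗ b) = M_{T̃,S}(b ⊗ a) for all a, b ∈ B(H). That is, l-qc-symmetrizability implies qc-symmetrizability. -/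

import Mathlib

open scoped ComplexOrder

/-- Kraus characterization of quantum channels (CPTP maps). -/
def IsCPTP {ι κ : Type*} [Fintype ι] [DecidableEq ι] [Fintype κ] [DecidableEq κ]
    (N : Matrix ι ι ℂ →ₗ[ℂ] Matrix κ κ ℂ) : Prop :=
  ∃ (m : ℕ) (G : Fin m → Matrix κ ι ℂ),
    (∀ a, N a = ∑ j, G j * a * (G j).conjTranspose) ∧
      (∑ j, (G j).conjTranspose * G j = 1)

/-- The elementary tensor `a₁ ⊗ ⋯ ⊗ a_l` of matrices. -/
def elemTensor {ι : Type*} {l : ℕ} (a : Fin l → Matrix ι ι ℂ) :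
    Matrix (Fin l → ι) (Fin l → ι) ℂ :=
  Matrix.of fun x y => ∏ i, a i (x i) (y i)

/-! Put `a` in the first tensor factor and the maximally mixed state in the other `l - 1`,
and read off a POVM on `H` from the first factor: `Ẽ_s` is the normalised partial trace
over the last `l - 1` factors of `∑_{s^l : s_1 = s} E_{s^l}`.  Then `tr(Ẽ_s a)` is, up to
the constant `d^{l-1}`, the `l`-letter coefficient `tr(E_{s^l} (a ⊗ 1))`, while the partial
trace of `N_{s^l}(b ⊗ 1)` is `d^{l-1} N_{s_1}(b)` because every channel preserves the trace.
Hence `M_{T̃,S}(a ⊗ b)` is a fixed multiple of the partial trace of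
`M^l_{T,S}((a ⊗ 1) ⊗ (b ⊗ 1))`, and symmetry descends. -/

theorem Fintype.sum_fin_succ_pi {α M : Type*} [Fintype α] [AddCommMonoid M] {k : ℕ}
    (f : (Fin (k + 1) → α) → M) : ∑ x, f x = ∑ a, ∑ w, f (Fin.cons a w) := by
  rw [← (Fin.consEquiv fun _ => α).sum_comp, Fintype.sum_prod_type]
  rfl

theorem IsCPTP.trace_map {ι κ : Type*} [Fintype ι] [DecidableEq ι] [Fintype κ] [DecidableEq κ]
    {N : Matrix ι ι ℂ →ₗ[ℂ] Matrix κ κ ℂ} (hN : IsCPTP N) (a : Matrix ι ι ℂ) :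
    (N a).trace = a.trace := by
  obtain ⟨m, G, hG, hsum⟩ := hN
  simp_rw [hG, Matrix.trace_sum, Matrix.trace_mul_cycle (G _), ← Matrix.trace_sum,
    ← Finset.sum_mul, hsum, one_mul]

section ElemTensor

variable {ι : Type*}

theorem elemTensor_cons_apply {k : ℕ} (a : Fin (k + 1) → Matrix ι ι ℂ) (x y : ι)
    (v w : Fin k → ι) :
    elemTensor a (Fin.cons x v) (Fin.cons y w) = a 0 x y * elemTensor (Fin.tail a) v w := by
  simp [elemTensor, Fin.prod_univ_succ, Fin.tail]

theorem trace_elemTensor [Fintype ι] {l : ℕ} (a : Fin l → Matrix ι ι ℂ) :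
    (elemTensor a).trace = ∏ i, (a i).trace := by
  simp [elemTensor, Matrix.trace, Fintype.prod_sum]

theorem elemTensor_one [DecidableEq ι] {l : ℕ} :
    elemTensor (fun _ : Fin l => (1 : Matrix ι ι ℂ)) = 1 := by
  ext x y
  simp [elemTensor, Matrix.one_apply, Fintype.prod_boole, ← funext_iff]

end ElemTensor

section TraceTail

variable {α R : Type*} [Fintype α] [CommSemiring R] {k : ℕ}

/-- The partial trace over all tensor factors but the first. -/
def traceTail : Matrix (Fin (k + 1) → α) (Fin (k + 1) → α) R →ₗ[R] Matrix α α R where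
  toFun M := Matrix.of fun x y => ∑ w, M (Fin.cons x w) (Fin.cons y w)
  map_add' M N := by ext; simp [Finset.sum_add_distrib]
  map_smul' c M := by ext; simp [Finset.mul_sum]

theorem traceTail_apply (M : Matrix (Fin (k + 1) → α) (Fin (k + 1) → α) R) (x y : α) :
    traceTail M x y = ∑ w, M (Fin.cons x w) (Fin.cons y w) := rfl

theorem traceTail_eq_sum_submatrix (M : Matrix (Fin (k + 1) → α) (Fin (k + 1) → α) R) :
    traceTail M = ∑ w, M.submatrix (Fin.cons · w) (Fin.cons · w) := by
  ext x y
  simp [traceTail_apply, Matrix.sum_apply]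

end TraceTail

theorem Matrix.PosSemidef.traceTail {α : Type*} [Fintype α] {k : ℕ}
    {M : Matrix (Fin (k + 1) → α) (Fin (k + 1) → α) ℂ} (hM : M.PosSemidef) :
    (traceTail M).PosSemidef := by
  rw [traceTail_eq_sum_submatrix]
  exact Matrix.posSemidef_sum _ fun w _ => hM.submatrix _

theorem traceTail_elemTensor {ι : Type*} [Fintype ι] {k : ℕ} (a : Fin (k + 1) → Matrix ι ι ℂ) :
    traceTail (elemTensor a) = (∏ i : Fin k, (a i.succ).trace) • a 0 := by
  ext x y
  rw [Matrix.smul_apply, smul_eq_mul, traceTail_apply]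
  simp_rw [elemTensor_cons_apply]
  rw [← Finset.mul_sum, mul_comm]
  exact congrArg (· * a 0 x y) (trace_elemTensor (Fin.tail a))

theorem trace_traceTail_mul {ι : Type*} [Fintype ι] [DecidableEq ι] {k : ℕ}
    (M : Matrix (Fin (k + 1) → ι) (Fin (k + 1) → ι) ℂ) (a : Matrix ι ι ℂ) :
    (traceTail M * a).trace = (M * elemTensor (Fin.cons a fun _ => 1)).trace := by
  simp only [Matrix.trace, Matrix.diag_apply, Matrix.mul_apply, traceTail_apply,
    Fintype.sum_fin_succ_pi, elemTensor_cons_apply, Fin.cons_zero, Fin.tail_cons, elemTensor_one,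
    Matrix.one_apply, mul_ite, mul_one, mul_zero, Finset.sum_ite_eq', Finset.mem_univ,
    if_true, Finset.sum_mul]
  exact Finset.sum_congr rfl fun _ _ => Finset.sum_comm

theorem traceTail_elemTensor_map_cons_one {ι κ : Type*} [Fintype ι] [DecidableEq ι] [Fintype κ]
    {k : ℕ} (N : Fin (k + 1) → Matrix ι ι ℂ →ₗ[ℂ] Matrix κ κ ℂ)
    (hN : ∀ i a, (N i a).trace = a.trace) (b : Matrix ι ι ℂ) :
    traceTail (elemTensor fun i => N i ((Fin.cons b fun _ => 1 : Fin (k + 1) → Matrix ι ι ℂ) i)) =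
      ((Fintype.card ι : ℂ) ^ k) • N 0 b := by
  simp [traceTail_elemTensor, hN]

section Marginal

variable {ι S : Type*} [Fintype ι] [Fintype S] [DecidableEq S] {k : ℕ}
  {E : (Fin (k + 1) → S) → Matrix (Fin (k + 1) → ι) (Fin (k + 1) → ι) ℂ}

/-- The marginal POVM of the context: `tr(Ẽ_s b) = tr((b ⊗ (1/d)^{⊗k}) ∑_{s^l : s_1 = s} E_{s^l})`
is `d^{-k} tr(b tr_{2..l}(∑ E))`. -/
noncomputable def marginalPOVM
    (E : (Fin (k + 1) → S) → Matrix (Fin (k + 1) → ι) (Fin (k + 1) → ι) ℂ) (s : S) :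
    Matrix ι ι ℂ :=
  ((Fintype.card ι : ℂ) ^ k)⁻¹ • traceTail (∑ sl with sl 0 = s, E sl)

theorem posSemidef_marginalPOVM (hE : ∀ sl, (E sl).PosSemidef) (s : S) :
    (marginalPOVM E s).PosSemidef :=
  (Matrix.posSemidef_sum _ fun sl _ => hE sl).traceTail.smul (by positivity)

theorem sum_marginalPOVM [DecidableEq ι] [Nonempty ι] (hE : ∑ sl, E sl = 1) :
    ∑ s, marginalPOVM E s = 1 := by
  have hd : (Fintype.card ι : ℂ) ^ k ≠ 0 := pow_ne_zero _ (Nat.cast_ne_zero.2 Fintype.card_ne_zero)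
  simp only [marginalPOVM]
  rw [← Finset.smul_sum, ← map_sum, Finset.sum_fiberwise, hE, ← elemTensor_one,
    traceTail_elemTensor]
  simp [hd]

theorem sum_trace_marginalPOVM_mul_smul [DecidableEq ι] {X : Type*} [AddCommMonoid X]
    [Module ℂ X] (N : S → X) (a : Matrix ι ι ℂ) :
    ∑ s, (marginalPOVM E s * a).trace • N s =
      ((Fintype.card ι : ℂ) ^ k)⁻¹ •
        ∑ sl, (E sl * elemTensor (Fin.cons a fun _ => 1)).trace • N (sl 0) := by
  simp only [marginalPOVM, smul_mul_assoc, Matrix.trace_smul, map_sum, Finset.sum_mul,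
    Matrix.trace_sum, trace_traceTail_mul, smul_eq_mul, mul_smul, ← Finset.smul_sum,
    Finset.sum_smul]
  congr 1
  rw [← Finset.sum_fiberwise Finset.univ (fun sl : Fin (k + 1) → S => sl 0)]
  refine Finset.sum_congr rfl fun s _ => Finset.sum_congr rfl fun sl hsl => ?_
  rw [(Finset.mem_filter.1 hsl).2]

end Marginal

/-- `l`-qc-symmetrizability implies qc-symmetrizability.  If there is a
POVM `{E_{s^l}}` on `H^{⊗l}` such that
`M^l(a ⊗ b) = ∑_{s^l} tr(E_{s^l} a) N_{s^l}(b)` is symmetric in `a, b`, then there is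
a POVM `{Ẽ_s}` on `H` such that `∑_s tr(Ẽ_s a) N_s(b) = ∑_s tr(Ẽ_s b) N_s(a)` for all
`a, b ∈ B(H)`.  Here `N_{s^l} = N_{s₁} ⊗ ⋯ ⊗ N_{s_l}` is given by the family `NT`
characterized on elementary tensors. -/
theorem stmt_14 {ι κ S : Type*} [Fintype ι] [DecidableEq ι] [Nonempty ι]
    [Fintype κ] [DecidableEq κ] [Fintype S]
    (Ns : S → (Matrix ι ι ℂ →ₗ[ℂ] Matrix κ κ ℂ)) (hNs : ∀ s, IsCPTP (Ns s))
    (l : ℕ) (hl : 0 < l)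
    (NT : (Fin l → S) → (Matrix (Fin l → ι) (Fin l → ι) ℂ →ₗ[ℂ]
      Matrix (Fin l → κ) (Fin l → κ) ℂ))
    (hNT : ∀ (sl : Fin l → S) (a : Fin l → Matrix ι ι ℂ),
      NT sl (elemTensor a) = elemTensor fun i => Ns (sl i) (a i))
    (E : (Fin l → S) → Matrix (Fin l → ι) (Fin l → ι) ℂ)
    (hEpsd : ∀ sl, (E sl).PosSemidef) (hEsum : ∑ sl, E sl = 1)
    (hsym : ∀ a b : Matrix (Fin l → ι) (Fin l → ι) ℂ,
      ∑ sl, (E sl * a).trace • NT sl b = ∑ sl, (E sl * b).trace • NT sl a) :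
    ∃ Et : S → Matrix ι ι ℂ,
      (∀ s, (Et s).PosSemidef) ∧ (∑ s, Et s = 1) ∧
      ∀ a b : Matrix ι ι ℂ,
        ∑ s, (Et s * a).trace • Ns s b = ∑ s, (Et s * b).trace • Ns s a := by
  classical
  obtain ⟨k, rfl⟩ := Nat.exists_eq_add_one_of_ne_zero hl.ne'
  have hd : (Fintype.card ι : ℂ) ^ k ≠ 0 := pow_ne_zero _ (Nat.cast_ne_zero.2 Fintype.card_ne_zero)
  let tensorOne (a : Matrix ι ι ℂ) :=
    elemTensor (Fin.cons a fun _ => 1 : Fin (k + 1) → Matrix ι ι ℂ)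
  have hdescend : ∀ a b, ∑ s, (marginalPOVM E s * a).trace • Ns s b =
      ((Fintype.card ι : ℂ) ^ k)⁻¹ ^ 2 •
        traceTail (∑ sl, (E sl * tensorOne a).trace • NT sl (tensorOne b)) := by
    intro a b
    simp only [tensorOne, map_sum, map_smul, hNT, sum_trace_marginalPOVM_mul_smul,
      traceTail_elemTensor_map_cons_one _ fun i => (hNs _).trace_map]
    simp_rw [smul_comm _ ((Fintype.card ι : ℂ) ^ k), ← Finset.smul_sum, smul_smul]
    field_simp
  refine ⟨marginalPOVM E, posSemidef_marginalPOVM hEpsd, sum_marginalPOVM hEsum, fun a b => ?_⟩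
  rw [hdescend, hdescend, hsym]
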